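/- Define a bilinear antisymmetric bracket on the real vector space with basis e₁,…,e₅ by: [e₁,e₂] = −4e₄ − 4e₅, [e₁,e₃] = −2e₁, [e₁,e₄] = 2e₂ + 4e₄, [e₁,e₅] = 2e₂ − 4e₅, [e₂,e₃] = −4e₂ − 4e₄, [e₃,e₄] = 2e₄, [e₃,e₅] = −2e₂ + 6e₅, and [e₂,e₄] = [e₂,e₅] = [e₄,e₅] = 0. Then this bracket satisfies the Jacobi identity, so it defines a 5-dimensional real Lie algebra 𝔤. Moreover the derived series of 𝔤 has dimensions 5, 4, 2, 0: the derived algebra [𝔤,𝔤] equals span(e₁,e₂,e₄,e₅), the second derived algebra is the 2-dimensional span(e₄+e₅, e₂+2e₄), and the third derived algebra is zero. Finally, span(e₂,e₄,e₅) is a 3-dimensional Abelian ideal of 𝔤. -/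
import Mathlib


/-- Structure constants of the bracket: `c i j : Fin 5 → ℝ` is the value `[eᵢ₊₁, eⱼ₊₁]`
(0-indexed), encoding `[e₁,e₂] = −4e₄ − 4e₅`, `[e₁,e₃] = −2e₁`, `[e₁,e₄] = 2e₂ + 4e₄`,
`[e₁,e₅] = 2e₂ − 4e₅`, `[e₂,e₃] = −4e₂ − 4e₄`, `[e₃,e₄] = 2e₄`, `[e₃,e₅] = −2e₂ + 6e₅`,
`[e₂,e₄] = [e₂,e₅] = [e₄,e₅] = 0`, together with antisymmetry. -/
noncomputable def c31 : Fin 5 → Fin 5 → Fin 5 → ℝ :=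
  ![![![0,0,0,0,0], ![0,0,0,-4,-4], ![-2,0,0,0,0], ![0,2,0,4,0],  ![0,2,0,0,-4]],
    ![![0,0,0,4,4],  ![0,0,0,0,0],  ![0,-4,0,-4,0], ![0,0,0,0,0],  ![0,0,0,0,0]],
    ![![2,0,0,0,0],  ![0,4,0,4,0],  ![0,0,0,0,0],  ![0,0,0,2,0],  ![0,-2,0,0,6]],
    ![![0,-2,0,-4,0],![0,0,0,0,0],  ![0,0,0,-2,0], ![0,0,0,0,0],  ![0,0,0,0,0]],
    ![![0,-2,0,0,4], ![0,0,0,0,0],  ![0,2,0,0,-6], ![0,0,0,0,0],  ![0,0,0,0,0]]]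

/-- The bilinear bracket on `ℝ⁵ = Fin 5 → ℝ` determined by the structure constants `c31`. -/
noncomputable def br31 (x y : Fin 5 → ℝ) : Fin 5 → ℝ :=
  fun k => ∑ i : Fin 5, ∑ j : Fin 5, x i * y j * c31 i j k

/-- The standard basis vector `eᵢ` of `ℝ⁵` (0-indexed). -/
noncomputable def e5 (i : Fin 5) : Fin 5 → ℝ := Pi.single i 1

/-- The derived algebra `[𝔤,𝔤]` as a submodule. -/
noncomputable def g31der : Submodule ℝ (Fin 5 → ℝ) :=
  Submodule.span ℝ {v | ∃ x y : Fin 5 → ℝ, v = br31 x y}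

/-- The second derived algebra `[[𝔤,𝔤],[𝔤,𝔤]]`. -/
noncomputable def g31der2 : Submodule ℝ (Fin 5 → ℝ) :=
  Submodule.span ℝ {v | ∃ x ∈ g31der, ∃ y ∈ g31der, v = br31 x y}

/-- The third derived algebra. -/
noncomputable def g31der3 : Submodule ℝ (Fin 5 → ℝ) :=
  Submodule.span ℝ {v | ∃ x ∈ g31der2, ∃ y ∈ g31der2, v = br31 x y}

/-- The span of `e₂, e₄, e₅` (0-indexed: `e 1, e 3, e 4`). -/
noncomputable def a31 : Submodule ℝ (Fin 5 → ℝ) :=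
  Submodule.span ℝ {e5 1, e5 3, e5 4}

lemma br0 (x y : Fin 5 → ℝ) : br31 x y 0 = -2*x 0*y 2 + 2*x 2*y 0 := by
  simp [br31, Fin.sum_univ_five, c31, Matrix.vecHead, Matrix.vecTail]; ring
lemma br1 (x y : Fin 5 → ℝ) : br31 x y 1 =
    2*x 0*y 3 + 2*x 0*y 4 - 4*x 1*y 2 + 4*x 2*y 1 - 2*x 2*y 4 - 2*x 3*y 0 - 2*x 4*y 0 + 2*x 4*y 2 := by
  simp [br31, Fin.sum_univ_five, c31, Matrix.vecHead, Matrix.vecTail]; ring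
lemma br2 (x y : Fin 5 → ℝ) : br31 x y 2 = 0 := by
  simp [br31, Fin.sum_univ_five, c31, Matrix.vecHead, Matrix.vecTail]
lemma br3 (x y : Fin 5 → ℝ) : br31 x y 3 =
    -4*x 0*y 1 + 4*x 0*y 3 + 4*x 1*y 0 - 4*x 1*y 2 + 4*x 2*y 1 + 2*x 2*y 3 - 4*x 3*y 0 - 2*x 3*y 2 := by
  simp [br31, Fin.sum_univ_five, c31, Matrix.vecHead, Matrix.vecTail]; ring
lemma br4 (x y : Fin 5 → ℝ) : br31 x y 4 =
    -4*x 0*y 1 - 4*x 0*y 4 + 4*x 1*y 0 + 6*x 2*y 4 + 4*x 4*y 0 - 6*x 4*y 2 := by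
  simp [br31, Fin.sum_univ_five, c31, Matrix.vecHead, Matrix.vecTail]; ring
lemma e5_apply (i k : Fin 5) : e5 i k = if k = i then 1 else 0 := by
  simp [e5, Pi.single_apply]
lemma coord_zero_of_mem_span {s : Set (Fin 5 → ℝ)} {i : Fin 5}
    (h : ∀ v ∈ s, v i = 0) {v : Fin 5 → ℝ} (hv : v ∈ Submodule.span ℝ s) : v i = 0 := by
  have hle : Submodule.span ℝ s ≤
      LinearMap.ker (LinearMap.proj (R := ℝ) (φ := fun _ : Fin 5 => ℝ) i) :=
    Submodule.span_le.mpr fun w hw => by simpa using h w hw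
  simpa using hle hv
lemma li_e5 : LinearIndependent ℝ e5 := by
  have h : e5 = ⇑(Pi.basisFun ℝ (Fin 5)) := by
    funext i; simp [e5]
  rw [h]; exact (Pi.basisFun ℝ (Fin 5)).linearIndependent
lemma finrank_span4 :
    Module.finrank ℝ (Submodule.span ℝ ({e5 0, e5 1, e5 3, e5 4} : Set (Fin 5 → ℝ))) = 4 := by
  have hf : Function.Injective (![0,1,3,4] : Fin 4 → Fin 5) := by decide
  have li : LinearIndependent ℝ (e5 ∘ ![0,1,3,4]) := li_e5.comp _ hf
  have hr : Set.range (e5 ∘ ![0,1,3,4]) = ({e5 0, e5 1, e5 3, e5 4} : Set (Fin 5 → ℝ)) := by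
    have : e5 ∘ ![0,1,3,4] = ![e5 0, e5 1, e5 3, e5 4] := by
      funext i; fin_cases i <;> rfl
    rw [this]
    simp only [Matrix.range_cons, Matrix.range_cons_empty, Set.singleton_union]
    ext v; simp
  have := finrank_span_eq_card li
  rw [hr] at this
  simpa using this
lemma finrank_span3 :
    Module.finrank ℝ (Submodule.span ℝ ({e5 1, e5 3, e5 4} : Set (Fin 5 → ℝ))) = 3 := by
  have hf : Function.Injective (![1,3,4] : Fin 3 → Fin 5) := by decide
  have li : LinearIndependent ℝ (e5 ∘ ![1,3,4]) := li_e5.comp _ hf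
  have hr : Set.range (e5 ∘ ![1,3,4]) = ({e5 1, e5 3, e5 4} : Set (Fin 5 → ℝ)) := by
    have : e5 ∘ ![1,3,4] = ![e5 1, e5 3, e5 4] := by
      funext i; fin_cases i <;> rfl
    rw [this]
    simp only [Matrix.range_cons, Matrix.range_cons_empty, Set.singleton_union]
    ext v; simp
  have := finrank_span_eq_card li
  rw [hr] at this
  simpa using this
lemma finrank_span2 :
    Module.finrank ℝ (Submodule.span ℝ
      ({e5 3 + e5 4, e5 1 + (2:ℝ) • e5 3} : Set (Fin 5 → ℝ))) = 2 := by
  have li : LinearIndependent ℝ ![e5 3 + e5 4, e5 1 + (2:ℝ) • e5 3] := by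
    rw [LinearIndependent.pair_iff]
    intro s t hst
    have h4 := congrFun hst 4
    have h1 := congrFun hst 1
    simp [e5_apply] at h4 h1
    exact ⟨h4, h1⟩
  have hr : Set.range ![e5 3 + e5 4, e5 1 + (2:ℝ) • e5 3] =
      ({e5 3 + e5 4, e5 1 + (2:ℝ) • e5 3} : Set (Fin 5 → ℝ)) := by
    simp only [Matrix.range_cons, Matrix.range_cons_empty, Set.singleton_union]
    ext v; simp
  have := finrank_span_eq_card li
  rw [hr] at this
  simpa using this
lemma mem_span4 (v : Fin 5 → ℝ) (h : v 2 = 0) :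
    v ∈ Submodule.span ℝ ({e5 0, e5 1, e5 3, e5 4} : Set (Fin 5 → ℝ)) := by
  have hv : v = v 0 • e5 0 + v 1 • e5 1 + v 3 • e5 3 + v 4 • e5 4 := by
    funext k; fin_cases k <;> simp [e5_apply, h]
  rw [hv]
  refine Submodule.add_mem _ (Submodule.add_mem _ (Submodule.add_mem _ ?_ ?_) ?_) ?_ <;>
    exact Submodule.smul_mem _ _ (Submodule.subset_span (by simp))
lemma mem_span3 (v : Fin 5 → ℝ) (h0 : v 0 = 0) (h2 : v 2 = 0) :
    v ∈ Submodule.span ℝ ({e5 1, e5 3, e5 4} : Set (Fin 5 → ℝ)) := by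
  have hv : v = v 1 • e5 1 + v 3 • e5 3 + v 4 • e5 4 := by
    funext k; fin_cases k <;> simp [e5_apply, h0, h2]
  rw [hv]
  refine Submodule.add_mem _ (Submodule.add_mem _ ?_ ?_) ?_ <;>
    exact Submodule.smul_mem _ _ (Submodule.subset_span (by simp))
lemma mem_span2 (v : Fin 5 → ℝ) (h0 : v 0 = 0) (h2 : v 2 = 0) (h3 : v 3 = 2 * v 1 + v 4) :
    v ∈ Submodule.span ℝ ({e5 3 + e5 4, e5 1 + (2:ℝ) • e5 3} : Set (Fin 5 → ℝ)) := by
  have hv : v = v 4 • (e5 3 + e5 4) + v 1 • (e5 1 + (2:ℝ) • e5 3) := by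
    funext k; fin_cases k <;> simp [e5_apply, h0, h2, h3] <;> ring
  rw [hv]
  exact Submodule.add_mem _ (Submodule.smul_mem _ _ (Submodule.subset_span (by simp)))
    (Submodule.smul_mem _ _ (Submodule.subset_span (by simp)))
private lemma kk2 : (⟨2, by norm_num⟩ : Fin 5) = 2 := rfl
private lemma kk3 : (⟨3, by norm_num⟩ : Fin 5) = 3 := rfl
private lemma kk4 : (⟨4, by norm_num⟩ : Fin 5) = 4 := rfl
lemma br_mem_der (x y : Fin 5 → ℝ) : br31 x y ∈ g31der :=
  Submodule.subset_span ⟨x, y, rfl⟩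
lemma e0_mem : e5 0 ∈ g31der := by
  have h : e5 0 = (-(1/2) : ℝ) • br31 (e5 0) (e5 2) := by
    funext k; fin_cases k <;>
      simp (config := { decide := true }) [Fin.zero_eta, Fin.mk_one, kk2, kk3, kk4, Pi.smul_apply, smul_eq_mul,
        br0, br1, br2, br3, br4, e5_apply, Fin.ext_iff] <;> norm_num
  rw [h]; exact Submodule.smul_mem _ _ (br_mem_der _ _)
lemma e3_mem : e5 3 ∈ g31der := by
  have h : e5 3 = ((1/2) : ℝ) • br31 (e5 2) (e5 3) := by
    funext k; fin_cases k <;>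
      simp (config := { decide := true }) [Fin.zero_eta, Fin.mk_one, kk2, kk3, kk4, Pi.smul_apply, smul_eq_mul,
        br0, br1, br2, br3, br4, e5_apply, Fin.ext_iff] <;> norm_num
  rw [h]; exact Submodule.smul_mem _ _ (br_mem_der _ _)
lemma e1_mem : e5 1 ∈ g31der := by
  have h : e5 1 = (-(1/4) : ℝ) • br31 (e5 1) (e5 2) - e5 3 := by
    funext k; fin_cases k <;>
      simp (config := { decide := true }) [Fin.zero_eta, Fin.mk_one, kk2, kk3, kk4, Pi.sub_apply, Pi.smul_apply,
        smul_eq_mul, br0, br1, br2, br3, br4, e5_apply, Fin.ext_iff] <;> norm_num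
  rw [h]; exact Submodule.sub_mem _ (Submodule.smul_mem _ _ (br_mem_der _ _)) e3_mem
lemma e4_mem : e5 4 ∈ g31der := by
  have h : e5 4 = ((1/6) : ℝ) • br31 (e5 2) (e5 4) + (1/3 : ℝ) • e5 1 := by
    funext k; fin_cases k <;>
      simp (config := { decide := true }) [Fin.zero_eta, Fin.mk_one, kk2, kk3, kk4, Pi.add_apply, Pi.smul_apply,
        smul_eq_mul, br0, br1, br2, br3, br4, e5_apply, Fin.ext_iff] <;> norm_num
  rw [h]
  exact Submodule.add_mem _ (Submodule.smul_mem _ _ (br_mem_der _ _))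
    (Submodule.smul_mem _ _ e1_mem)
lemma g31der_eq : g31der = Submodule.span ℝ ({e5 0, e5 1, e5 3, e5 4} : Set (Fin 5 → ℝ)) := by
  apply le_antisymm
  · apply Submodule.span_le.mpr
    rintro v ⟨x, y, rfl⟩
    exact mem_span4 _ (br2 x y)
  · apply Submodule.span_le.mpr
    rintro v hv
    simp only [Set.mem_insert_iff, Set.mem_singleton_iff] at hv
    rcases hv with rfl | rfl | rfl | rfl
    exacts [e0_mem, e1_mem, e3_mem, e4_mem]
lemma mem_der_coord2 {v : Fin 5 → ℝ} (hv : v ∈ g31der) : v 2 = 0 := by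
  rw [g31der_eq] at hv
  refine coord_zero_of_mem_span ?_ hv
  rintro w hw
  simp only [Set.mem_insert_iff, Set.mem_singleton_iff] at hw
  rcases hw with rfl | rfl | rfl | rfl <;> simp [e5_apply]
lemma g31der2_eq : g31der2 =
    Submodule.span ℝ ({e5 3 + e5 4, e5 1 + (2:ℝ) • e5 3} : Set (Fin 5 → ℝ)) := by
  apply le_antisymm
  · apply Submodule.span_le.mpr
    rintro v ⟨x, hx, y, hy, rfl⟩
    have hx2 := mem_der_coord2 hx
    have hy2 := mem_der_coord2 hy
    refine mem_span2 _ ?_ (br2 x y) ?_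
    · rw [br0, hx2, hy2]; ring
    · rw [br3, br1, br4, hx2, hy2]; ring
  · apply Submodule.span_le.mpr
    rintro v hv
    simp only [Set.mem_insert_iff, Set.mem_singleton_iff] at hv
    have m1 : br31 (e5 0) (e5 1) ∈ g31der2 :=
      Submodule.subset_span ⟨e5 0, e0_mem, e5 1, e1_mem, rfl⟩
    have m2 : br31 (e5 0) (e5 3) ∈ g31der2 :=
      Submodule.subset_span ⟨e5 0, e0_mem, e5 3, e3_mem, rfl⟩
    rcases hv with rfl | rfl
    · have h : e5 3 + e5 4 = (-(1/4) : ℝ) • br31 (e5 0) (e5 1) := by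
        funext k; fin_cases k <;>
          simp (config := { decide := true }) [Fin.zero_eta, Fin.mk_one, kk2, kk3, kk4,
            Pi.add_apply, Pi.smul_apply, smul_eq_mul, br0, br1, br2, br3, br4, e5_apply] <;>
          norm_num
      rw [h]; exact Submodule.smul_mem _ _ m1
    · have h : e5 1 + (2:ℝ) • e5 3 = ((1/2) : ℝ) • br31 (e5 0) (e5 3) := by
        funext k; fin_cases k <;>
          simp (config := { decide := true }) [Fin.zero_eta, Fin.mk_one, kk2, kk3, kk4,
            Pi.add_apply, Pi.smul_apply, smul_eq_mul, br0, br1, br2, br3, br4, e5_apply] <;>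
          norm_num
      rw [h]; exact Submodule.smul_mem _ _ m2
lemma mem_der2_coords {v : Fin 5 → ℝ} (hv : v ∈ g31der2) : v 0 = 0 ∧ v 2 = 0 := by
  rw [g31der2_eq] at hv
  constructor <;>
  · refine coord_zero_of_mem_span ?_ hv
    rintro w hw
    simp only [Set.mem_insert_iff, Set.mem_singleton_iff] at hw
    rcases hw with rfl | rfl <;>
      simp (config := { decide := true }) [Pi.add_apply, Pi.smul_apply, e5_apply]
lemma g31der3_eq : g31der3 = ⊥ := by
  refine le_antisymm (Submodule.span_le.mpr ?_) bot_le
  rintro v ⟨x, hx, y, hy, rfl⟩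
  obtain ⟨hx0, hx2⟩ := mem_der2_coords hx
  obtain ⟨hy0, hy2⟩ := mem_der2_coords hy
  have h : br31 x y = 0 := by
    funext k
    fin_cases k <;>
      simp only [Fin.zero_eta, Fin.mk_one, kk2, kk3, kk4, br0, br1, br2, br3, br4,
        Pi.zero_apply, hx0, hx2, hy0, hy2] <;> ring
  simp [h, Submodule.mem_bot]
lemma mem_a31_coords {v : Fin 5 → ℝ} (hv : v ∈ a31) : v 0 = 0 ∧ v 2 = 0 := by
  rw [a31, show ({e5 1, e5 3, e5 4} : Set (Fin 5 → ℝ)) = {e5 1, e5 3, e5 4} from rfl] at hv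
  constructor <;>
  · refine coord_zero_of_mem_span ?_ hv
    rintro w hw
    simp only [Set.mem_insert_iff, Set.mem_singleton_iff] at hw
    rcases hw with rfl | rfl | rfl <;>
      simp (config := { decide := true }) [e5_apply]
lemma a31_ideal (x : Fin 5 → ℝ) {a : Fin 5 → ℝ} (ha : a ∈ a31) : br31 x a ∈ a31 := by
  obtain ⟨ha0, ha2⟩ := mem_a31_coords ha
  have h0 : br31 x a 0 = 0 := by rw [br0, ha0, ha2]; ring
  exact mem_span3 _ h0 (br2 x a)
lemma a31_abelian {a b : Fin 5 → ℝ} (ha : a ∈ a31) (hb : b ∈ a31) : br31 a b = 0 := by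
  obtain ⟨ha0, ha2⟩ := mem_a31_coords ha
  obtain ⟨hb0, hb2⟩ := mem_a31_coords hb
  funext k
  fin_cases k <;>
    simp only [Fin.zero_eta, Fin.mk_one, kk2, kk3, kk4, br0, br1, br2, br3, br4,
      Pi.zero_apply, ha0, ha2, hb0, hb2] <;> ring

/-- The bracket (Theorem 3.1) is bilinear and antisymmetric, satisfies the Jacobi identity —
hence defines a 5-dimensional real Lie algebra `𝔤` — whose derived series has dimensions
5, 4, 2, 0: `[𝔤,𝔤] = span(e₁,e₂,e₄,e₅)`, the second derived algebra is
`span(e₄+e₅, e₂+2e₄)` of dimension 2, the third is zero. Moreover `span(e₂,e₄,e₅)`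
is a 3-dimensional Abelian ideal. -/
theorem branch_F30020_lie_algebra :
    (∀ (a : ℝ) (x y z : Fin 5 → ℝ), br31 (a • x + y) z = a • br31 x z + br31 y z) ∧
    (∀ x y : Fin 5 → ℝ, br31 x y = - br31 y x) ∧
    (∀ x y z : Fin 5 → ℝ,
      br31 x (br31 y z) + br31 y (br31 z x) + br31 z (br31 x y) = 0) ∧
    Module.finrank ℝ (Fin 5 → ℝ) = 5 ∧
    g31der = Submodule.span ℝ {e5 0, e5 1, e5 3, e5 4} ∧
    Module.finrank ℝ g31der = 4 ∧
    g31der2 = Submodule.span ℝ {e5 3 + e5 4, e5 1 + (2 : ℝ) • e5 3} ∧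
    Module.finrank ℝ g31der2 = 2 ∧
    g31der3 = ⊥ ∧
    (∀ x : Fin 5 → ℝ, ∀ a ∈ a31, br31 x a ∈ a31) ∧
    (∀ a ∈ a31, ∀ b ∈ a31, br31 a b = 0) ∧
    Module.finrank ℝ a31 = 3 := by
  refine ⟨?_, ?_, ?_, ?_, g31der_eq, ?_, g31der2_eq, ?_, g31der3_eq,
    fun x a ha => a31_ideal x ha, fun a ha b hb => a31_abelian ha hb, ?_⟩
  · intro a x y z
    funext k
    fin_cases k <;>
      simp only [Fin.zero_eta, Fin.mk_one, kk2, kk3, kk4, Pi.add_apply, Pi.smul_apply,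
        smul_eq_mul, br0, br1, br2, br3, br4] <;> ring
  · intro x y
    funext k
    fin_cases k <;>
      simp only [Fin.zero_eta, Fin.mk_one, kk2, kk3, kk4, Pi.neg_apply,
        br0, br1, br2, br3, br4] <;> ring
  · intro x y z
    funext k
    fin_cases k <;>
      simp only [Fin.zero_eta, Fin.mk_one, kk2, kk3, kk4, Pi.add_apply, Pi.zero_apply,
        br0, br1, br2, br3, br4] <;> ring
  · simp [Module.finrank_pi]
  · rw [g31der_eq]; exact finrank_span4
  · rw [g31der2_eq]; exact finrank_span2
  · exact finrank_span3
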